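/- arXiv:1911.12800 — 5 statements merged into one kernel-verified Lean document; each statement's English description precedes it below -/
import Mathlib

section
/- (Lemma 2.1: asymptotic negligibility of marks of tempered configurations) If γ belongs to the tempered class M^t, then (1/l)·𝔪(γ_{B(0,l)}) tends to 0 as the natural number l tends to infinity. -/
/-!
A single point `(x, m)` of `γ_{B(0,l)}` is itself a finite subconfiguration, so temperedness gives
`‖m‖^(d+δ) ≤ t·l^d`, i.e. `𝔪(γ_{B(0,l)}) ≤ (t·l^d)^(1/(d+δ))`. Since `d/(d+δ) < 1`, this bound is
`o(l)`.
-/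

open Metric Filter Topology

theorem sSup_norm_snd_le_rpow_inv {E S : Type*} [NormedAddCommGroup S] {A : Set (E × S)}
    {q C : ℝ} (hq : 0 < q) (hC : 0 ≤ C) (hA : ∀ p ∈ A, ‖p.2‖ ^ q ≤ C) :
    sSup ((fun p : E × S => ‖p.2‖) '' A) ≤ C ^ q⁻¹ := by
  refine Real.sSup_le ?_ (by positivity)
  rintro _ ⟨p, hp, rfl⟩
  exact (Real.le_rpow_inv_iff_of_pos (norm_nonneg _) hC hq).2 (hA p hp)

theorem tendsto_one_div_mul_rpow_inv_atTop {t q : ℝ} {d : ℕ} (ht : 0 ≤ t) (hdq : (d : ℝ) < q) :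
    Tendsto (fun l : ℕ => 1 / (l : ℝ) * (t * (l : ℝ) ^ d) ^ q⁻¹) atTop (𝓝 0) := by
  have hq : 0 < q := (Nat.cast_nonneg d).trans_lt hdq
  have hexp : 0 < 1 - d * q⁻¹ := by
    rw [sub_pos, ← div_eq_mul_inv, div_lt_one hq]
    exact hdq
  have hpow : Tendsto (fun l : ℕ => t ^ q⁻¹ * (l : ℝ) ^ (-(1 - d * q⁻¹))) atTop (𝓝 0) := by
    simpa using ((tendsto_rpow_neg_atTop hexp).comp tendsto_natCast_atTop_atTop).const_mul
      (t ^ q⁻¹)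
  refine hpow.congr' ?_
  filter_upwards [eventually_gt_atTop 0] with l hl
  have hl : (0 : ℝ) < l := Nat.cast_pos.2 hl
  rw [Real.mul_rpow ht (by positivity), ← Real.rpow_natCast (l : ℝ) d,
    ← Real.rpow_mul hl.le, neg_sub, Real.rpow_sub hl, Real.rpow_one]
  field_simp

theorem tempered_mark_sup_isLittleO_general
    (d : ℕ) (δ t : ℝ) (hδ : 0 < δ) (ht : 1 ≤ t)
    {S : Type*} [NormedAddCommGroup S]
    (γ : Set (EuclideanSpace ℝ (Fin d) × S))
    (htemp : ∀ l : ℕ, 1 ≤ l →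
      ∀ F : Finset (EuclideanSpace ℝ (Fin d) × S),
        ↑F ⊆ γ ∩ (ball (0 : EuclideanSpace ℝ (Fin d)) (l : ℝ) ×ˢ Set.univ) →
        ∑ p ∈ F, (1 + ‖p.2‖ ^ ((d : ℝ) + δ)) ≤ t * (l : ℝ) ^ d) :
    Filter.Tendsto
      (fun l : ℕ =>
        (1 / (l : ℝ)) *
          sSup ((fun p : EuclideanSpace ℝ (Fin d) × S => ‖p.2‖) ''
            (γ ∩ (ball (0 : EuclideanSpace ℝ (Fin d)) (l : ℝ) ×ˢ Set.univ))))
      Filter.atTop (nhds 0) := by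
  have ht0 : 0 ≤ t := zero_le_one.trans ht
  refine squeeze_zero' (Eventually.of_forall fun l => ?_) ?_
    (tendsto_one_div_mul_rpow_inv_atTop ht0 (lt_add_of_pos_right (d : ℝ) hδ))
  · exact mul_nonneg (by positivity) (Real.sSup_nonneg (by rintro _ ⟨p, -, rfl⟩; positivity))
  filter_upwards [eventually_ge_atTop 1] with l hl
  have hmark : ∀ p ∈ γ ∩ (ball (0 : EuclideanSpace ℝ (Fin d)) (l : ℝ) ×ˢ Set.univ),
      ‖p.2‖ ^ ((d : ℝ) + δ) ≤ t * (l : ℝ) ^ d := fun p hp => by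
    have hsingle := htemp l hl {p} (by simpa using hp)
    rw [Finset.sum_singleton] at hsingle
    linarith
  gcongr
  exact sSup_norm_snd_le_rpow_inv (by positivity) (by positivity) hmark

/-- (Lemma 2.1) If `γ` belongs to the tempered class `M^t`, then
`(1/l) · 𝔪(γ_{B(0,l)})` tends to `0` as `l → ∞`. -/
theorem tempered_mark_sup_isLittleO
    (d : ℕ) (hd : 1 ≤ d) (δ t : ℝ) (hδ : 0 < δ) (ht : 1 ≤ t)
    {S : Type*} [NormedAddCommGroup S] [NormedSpace ℝ S]
    (γ : Set (EuclideanSpace ℝ (Fin d) × S))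
    (htemp : ∀ l : ℕ, 1 ≤ l →
      ∀ F : Finset (EuclideanSpace ℝ (Fin d) × S),
        ↑F ⊆ γ ∩ (ball (0 : EuclideanSpace ℝ (Fin d)) (l : ℝ) ×ˢ Set.univ) →
        ∑ p ∈ F, (1 + ‖p.2‖ ^ ((d : ℝ) + δ)) ≤ t * (l : ℝ) ^ d) :
    Filter.Tendsto
      (fun l : ℕ =>
        (1 / (l : ℝ)) *
          sSup ((fun p : EuclideanSpace ℝ (Fin d) × S => ‖p.2‖) ''
            (γ ∩ (ball (0 : EuclideanSpace ℝ (Fin d)) (l : ℝ) ×ˢ Set.univ))))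
      Filter.atTop (nhds 0) :=
  tempered_mark_sup_isLittleO_general d δ t hδ ht γ htemp
end

section
/- (Lemma 2.2: far points of a tempered configuration do not reach a fixed ball) Let γ belong to the tempered class M^t with t ≥ 1, and set 𝔩(t) := (1/2)·(t·2^{d+δ})^{1/δ}. Then for every real l ≥ 𝔩(t) and every (x,m) ∈ γ with |x| ≥ 2l+1, one has |x| − ‖m‖ ≥ l; in particular the open Euclidean balls B(x,‖m‖) and B(0,l) in ℝ^d are disjoint. -/
/-!
Testing temperedness on the singleton `{(x, m)}` in the ball of integer radius `⌊‖x‖⌋ + 1`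
gives `‖m‖ ^ (d + δ) ≤ t (‖x‖ + 1) ^ d`. The choice of `𝔩(t)` makes the right-hand side at most
`((‖x‖ + 1) / 2) ^ (d + δ)`, so `‖m‖ ≤ (‖x‖ + 1) / 2`, which is at most `‖x‖ - l` once `‖x‖ ≥ 2l + 1`.
-/

open Metric

/-- The tempered class `M^t`. -/
def IsTempered {E S : Type*} [SeminormedAddCommGroup E] [Norm S] (d : ℕ) (δ t : ℝ)
    (γ : Set (E × S)) : Prop :=
  ∀ l : ℕ, 1 ≤ l → ∀ F : Finset (E × S), ↑F ⊆ γ ∩ (ball (0 : E) l ×ˢ Set.univ) →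
    ∑ p ∈ F, (1 + ‖p.2‖ ^ ((d : ℝ) + δ)) ≤ t * (l : ℝ) ^ d

theorem Real.mul_rpow_le_half_rpow_add {d δ t b : ℝ} (hδ : 0 < δ) (ht : 0 ≤ t) (hb : 0 < b)
    (h : (t * 2 ^ (d + δ)) ^ (1 / δ) ≤ b) : t * b ^ d ≤ (b / 2) ^ (d + δ) := by
  have h2 : (0 : ℝ) < 2 ^ (d + δ) := by positivity
  have hδb : t * 2 ^ (d + δ) ≤ b ^ δ := by
    have := Real.rpow_le_rpow (by positivity) h hδ.le
    rwa [one_div, Real.rpow_inv_rpow (by positivity) hδ.ne'] at this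
  calc t * b ^ d = t * 2 ^ (d + δ) * b ^ d / 2 ^ (d + δ) := by field_simp
    _ ≤ b ^ δ * b ^ d / 2 ^ (d + δ) := by gcongr
    _ = (b / 2) ^ (d + δ) := by
      rw [Real.div_rpow hb.le zero_le_two, Real.rpow_add hb, mul_comm]

namespace IsTempered

variable {E S : Type*} [SeminormedAddCommGroup E] [SeminormedAddGroup S] {d : ℕ} {δ t : ℝ} {γ : Set (E × S)}

theorem one_add_rpow_le (hγ : IsTempered d δ t γ) (ht : 0 ≤ t) {x : E} {m : S}
    (hxm : (x, m) ∈ γ) : 1 + ‖m‖ ^ ((d : ℝ) + δ) ≤ t * (‖x‖ + 1) ^ d := by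
  set n : ℕ := ⌊‖x‖⌋₊ + 1
  have hxn : ‖x‖ < n := by simpa [n] using Nat.lt_floor_add_one ‖x‖
  have hnx : (n : ℝ) ≤ ‖x‖ + 1 := by
    simpa [n] using Nat.floor_le (norm_nonneg x)
  have hsingleton : ↑({(x, m)} : Finset (E × S)) ⊆ γ ∩ (ball (0 : E) n ×ˢ Set.univ) := by
    simpa [Set.mem_prod, mem_ball, dist_zero_right] using ⟨hxm, hxn⟩
  calc 1 + ‖m‖ ^ ((d : ℝ) + δ) ≤ t * (n : ℝ) ^ d := by
        simpa using hγ n (Nat.le_add_left 1 _) {(x, m)} hsingleton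
    _ ≤ t * (‖x‖ + 1) ^ d := by gcongr

theorem norm_le_half (hγ : IsTempered d δ t γ) (hδ : 0 < δ) (ht : 0 ≤ t) {x : E} {m : S}
    (hxm : (x, m) ∈ γ) (hx : (t * 2 ^ ((d : ℝ) + δ)) ^ (1 / δ) ≤ ‖x‖ + 1) :
    ‖m‖ ≤ (‖x‖ + 1) / 2 := by
  have hx1 : (0 : ℝ) < ‖x‖ + 1 := by positivity
  have hbound : ‖m‖ ^ ((d : ℝ) + δ) ≤ ((‖x‖ + 1) / 2) ^ ((d : ℝ) + δ) :=
    calc ‖m‖ ^ ((d : ℝ) + δ) ≤ t * (‖x‖ + 1) ^ d := by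
          linarith [hγ.one_add_rpow_le ht hxm]
      _ ≤ ((‖x‖ + 1) / 2) ^ ((d : ℝ) + δ) := by
          rw [← Real.rpow_natCast]
          exact Real.mul_rpow_le_half_rpow_add hδ ht hx1 hx
  exact (Real.rpow_le_rpow_iff (norm_nonneg m) (by positivity) (by positivity)).mp hbound

end IsTempered

theorem tempered_far_points_do_not_reach_general
    (d : ℕ) (δ t : ℝ) (hδ : 0 < δ) (ht : 1 ≤ t)
    {S : Type*} [NormedAddCommGroup S]
    (γ : Set (EuclideanSpace ℝ (Fin d) × S))
    (htemp : ∀ l : ℕ, 1 ≤ l →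
      ∀ F : Finset (EuclideanSpace ℝ (Fin d) × S),
        ↑F ⊆ γ ∩ (ball (0 : EuclideanSpace ℝ (Fin d)) (l : ℝ) ×ˢ Set.univ) →
        ∑ p ∈ F, (1 + ‖p.2‖ ^ ((d : ℝ) + δ)) ≤ t * (l : ℝ) ^ d)
    (l : ℝ) (hl : (1 / 2) * (t * 2 ^ ((d : ℝ) + δ)) ^ (1 / δ) ≤ l)
    (x : EuclideanSpace ℝ (Fin d)) (m : S) (hxm : (x, m) ∈ γ)
    (hfar : 2 * l + 1 ≤ ‖x‖) :
    l ≤ ‖x‖ - ‖m‖ ∧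
    Disjoint (ball x ‖m‖) (ball (0 : EuclideanSpace ℝ (Fin d)) l) := by
  have hγ : IsTempered d δ t γ := htemp
  have hm : ‖m‖ ≤ (‖x‖ + 1) / 2 := hγ.norm_le_half hδ (by linarith) hxm (by linarith)
  have hreach : l ≤ ‖x‖ - ‖m‖ := by linarith
  refine ⟨hreach, ball_disjoint_ball ?_⟩
  rw [dist_zero_right]
  linarith

/-- (Lemma 2.2) Far points of a tempered configuration do not reach a fixed ball:
if `γ ∈ M^t`, `𝔩(t) = (1/2)·(t·2^{d+δ})^{1/δ}`, `l ≥ 𝔩(t)` and `(x,m) ∈ γ` with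
`|x| ≥ 2l+1`, then `|x| − ‖m‖ ≥ l`, so `B(x,‖m‖) ∩ B(0,l) = ∅`. -/
theorem tempered_far_points_do_not_reach
    (d : ℕ) (hd : 1 ≤ d) (δ t : ℝ) (hδ : 0 < δ) (ht : 1 ≤ t)
    {S : Type*} [NormedAddCommGroup S] [NormedSpace ℝ S]
    (γ : Set (EuclideanSpace ℝ (Fin d) × S))
    (htemp : ∀ l : ℕ, 1 ≤ l →
      ∀ F : Finset (EuclideanSpace ℝ (Fin d) × S),
        ↑F ⊆ γ ∩ (ball (0 : EuclideanSpace ℝ (Fin d)) (l : ℝ) ×ˢ Set.univ) →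
        ∑ p ∈ F, (1 + ‖p.2‖ ^ ((d : ℝ) + δ)) ≤ t * (l : ℝ) ^ d)
    (l : ℝ) (hl : (1 / 2) * (t * 2 ^ ((d : ℝ) + δ)) ^ (1 / δ) ≤ l)
    (x : EuclideanSpace ℝ (Fin d)) (m : S) (hxm : (x, m) ∈ γ)
    (hfar : 2 * l + 1 ≤ ‖x‖) :
    l ≤ ‖x‖ - ‖m‖ ∧
    Disjoint (ball x ‖m‖) (ball (0 : EuclideanSpace ℝ (Fin d)) l) :=
  tempered_far_points_do_not_reach_general d δ t hδ ht γ htemp l hl x m hxm hfar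
end

section
/- (Lemma 2.3: the partition function is well defined) Under the above assumptions, the partition function Z_Λ := e^{−z|Λ|} · ( 1 + Σ_{k=1}^∞ (z^k/k!) · ∫_{(Λ×S)^k} exp( −h_k((x₁,m₁),…,(x_k,m_k)) ) dx₁ R(dm₁) ⋯ dx_k R(dm_k) ) is finite and positive: 0 < Z_Λ < ∞. -/
/-!
Stability bounds `e^{-h_k}` by a product of one-particle weights `e^{c(1 + ‖mᵢ‖^{d+δ})}`.
Since `c t^{d+δ} ≤ C + t^{d+2δ}`, the moment assumption makes the weight `R`-integrable, so the
`k`-particle integral is at most `A^k` with `A = |Λ| ∫ e^{c(1 + ‖m‖^{d+δ})} dR < ∞`, and the series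
is dominated by `e^{zA}`. Positivity comes from the term `1` of the empty configuration.
-/

open MeasureTheory
open scoped ENNReal Nat

theorem MeasureTheory.lintegral_pi_prod_eq_pow {α : Type*} [MeasurableSpace α] (μ : Measure α)
    [SigmaFinite μ] {g : α → ℝ≥0∞} (hg : Measurable g) (n : ℕ) :
    ∫⁻ x : Fin n → α, ∏ i, g (x i) ∂(Measure.pi fun _ => μ) = (∫⁻ x, g x ∂μ) ^ n := by
  induction n with
  | zero => simp
  | succ n ih =>
    have hsplit := (measurePreserving_piFinSuccAbove (fun _ : Fin (n + 1) => μ) 0).symm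
    rw [← hsplit.lintegral_comp_emb (MeasurableEquiv.measurableEmbedding _)]
    simp only [MeasurableEquiv.piFinSuccAbove_symm_apply, Fin.insertNthEquiv, Equiv.coe_fn_mk,
      Fin.prod_univ_succ, Fin.insertNth_zero, Fin.zero_succAbove, Fin.cons_zero, Fin.cons_succ,
      cast_eq]
    have hprod : Measurable fun x : Fin n → α => ∏ i, g (x i) :=
      Finset.measurable_prod _ fun i _ => hg.comp (measurable_pi_apply i)
    rw [lintegral_prod_mul hg.aemeasurable hprod.aemeasurable, ih, pow_succ']

theorem MeasureTheory.lintegral_fun_snd {α β : Type*} [MeasurableSpace α] [MeasurableSpace β]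
    (μ : Measure α) (ν : Measure β) [SFinite ν] {f : β → ℝ≥0∞} (hf : Measurable f) :
    ∫⁻ z, f z.2 ∂μ.prod ν = μ Set.univ * ∫⁻ y, f y ∂ν := by
  rw [← lintegral_map hf measurable_snd, Measure.map_snd_prod, lintegral_smul_measure, smul_eq_mul]

lemma Real.exists_mul_rpow_le_add_rpow {a δ c : ℝ} (ha : 0 ≤ a) (hδ : 0 < δ) (hc : 0 ≤ c) :
    ∃ C, ∀ t : ℝ, 0 ≤ t → c * t ^ a ≤ C + t ^ (a + δ) := by
  set T := c ^ δ⁻¹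
  have hT : 0 ≤ T := Real.rpow_nonneg hc _
  refine ⟨c * T ^ a, fun t ht => ?_⟩
  rcases le_total t T with htT | hTt
  · have : c * t ^ a ≤ c * T ^ a := by gcongr
    linarith [Real.rpow_nonneg ht (a + δ)]
  · have hcT : c ≤ t ^ δ := calc
      c = T ^ δ := by rw [← Real.rpow_mul hc, inv_mul_cancel₀ hδ.ne', Real.rpow_one]
      _ ≤ t ^ δ := by gcongr
    have : c * t ^ a ≤ t ^ (a + δ) := by
      rw [Real.rpow_add' ht (by linarith), mul_comm (t ^ a)]
      gcongr
    linarith [mul_nonneg hc (Real.rpow_nonneg hT a)]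

lemma lintegral_exp_mul_rpow_lt_top {X : Type*} [MeasurableSpace X] (μ : Measure X)
    {f : X → ℝ} (hf : ∀ x, 0 ≤ f x) {a δ c : ℝ} (ha : 0 ≤ a) (hδ : 0 < δ) (hc : 0 ≤ c)
    (hμ : ∫⁻ x, ENNReal.ofReal (Real.exp (f x ^ (a + δ))) ∂μ < ⊤) :
    ∫⁻ x, ENNReal.ofReal (Real.exp (c * (1 + f x ^ a))) ∂μ < ⊤ := by
  obtain ⟨C, hC⟩ := Real.exists_mul_rpow_le_add_rpow ha hδ hc
  have hpt : ∀ x, ENNReal.ofReal (Real.exp (c * (1 + f x ^ a)))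
      ≤ ENNReal.ofReal (Real.exp (c + C)) * ENNReal.ofReal (Real.exp (f x ^ (a + δ))) := by
    intro x
    rw [← ENNReal.ofReal_mul (Real.exp_nonneg _), ← Real.exp_add]
    gcongr
    linarith [hC (f x) (hf x)]
  calc ∫⁻ x, ENNReal.ofReal (Real.exp (c * (1 + f x ^ a))) ∂μ
      ≤ ∫⁻ x, ENNReal.ofReal (Real.exp (c + C)) *
          ENNReal.ofReal (Real.exp (f x ^ (a + δ))) ∂μ := lintegral_mono hpt
    _ = ENNReal.ofReal (Real.exp (c + C)) *
          ∫⁻ x, ENNReal.ofReal (Real.exp (f x ^ (a + δ))) ∂μ :=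
        lintegral_const_mul' _ _ ENNReal.ofReal_ne_top
    _ < ⊤ := ENNReal.mul_lt_top ENNReal.ofReal_lt_top hμ

lemma lintegral_exp_neg_le_pow_of_stable {X : Type*} [MeasurableSpace X] (μ : Measure X)
    [SigmaFinite μ] {w : X → ℝ} (hw : Measurable w) {n : ℕ} (H : (Fin n → X) → ℝ)
    (hH : ∀ p, -∑ i, w (p i) ≤ H p) :
    ∫⁻ p, ENNReal.ofReal (Real.exp (-H p)) ∂(Measure.pi fun _ => μ)
      ≤ (∫⁻ x, ENNReal.ofReal (Real.exp (w x)) ∂μ) ^ n := by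
  have hweight : Measurable fun x => ENNReal.ofReal (Real.exp (w x)) := by fun_prop
  rw [← lintegral_pi_prod_eq_pow μ hweight]
  refine lintegral_mono fun p => ?_
  rw [← ENNReal.ofReal_prod_of_nonneg fun i _ => Real.exp_nonneg _, ← Real.exp_sum]
  gcongr
  linarith [hH p]

lemma tsum_ofReal_pow_div_factorial_mul_pow_lt_top {z : ℝ} (hz : 0 ≤ z) {A : ℝ≥0∞}
    (hA : A ≠ ⊤) : ∑' k : ℕ, ENNReal.ofReal (z ^ k / k !) * A ^ k < ⊤ := by
  have hterm : ∀ k : ℕ, ENNReal.ofReal (z ^ k / k !) * A ^ k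
      = ENNReal.ofReal ((z * A.toReal) ^ k / k !) := by
    intro k
    rw [← ENNReal.ofReal_toReal hA, ← ENNReal.ofReal_pow ENNReal.toReal_nonneg,
      ← ENNReal.ofReal_mul (by positivity), ENNReal.toReal_ofReal ENNReal.toReal_nonneg]
    ring_nf
  simp_rw [hterm]
  rw [← ENNReal.ofReal_tsum_of_nonneg (fun k => by positivity)
    (Real.summable_pow_div_factorial _)]
  exact ENNReal.ofReal_lt_top
theorem partition_function_well_defined_general
    (d : ℕ) (δ z c : ℝ) (hδ : 0 < δ) (hz : 0 < z) (hc : 0 ≤ c)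
    {S : Type*} [NormedAddCommGroup S]
    [MeasurableSpace S] [BorelSpace S]
    (R : Measure S) [IsProbabilityMeasure R]
    (hR : ∫⁻ m, ENNReal.ofReal (Real.exp (‖m‖ ^ ((d : ℝ) + 2 * δ))) ∂ R < ⊤)
    (Λ : Set (EuclideanSpace ℝ (Fin d)))
    (hΛb : Bornology.IsBounded Λ)
    (h : (k : ℕ) → (Fin k → EuclideanSpace ℝ (Fin d) × S) → ℝ)
    (hstab : ∀ (k : ℕ) (p : Fin k → EuclideanSpace ℝ (Fin d) × S),
      -(c * ∑ i, (1 + ‖(p i).2‖ ^ ((d : ℝ) + δ))) ≤ h k p) :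
    0 < ENNReal.ofReal (Real.exp (-z * (volume Λ).toReal)) *
        (1 + ∑' k : ℕ,
          ENNReal.ofReal (z ^ (k + 1) / (Nat.factorial (k + 1) : ℝ)) *
            ∫⁻ p : Fin (k + 1) → EuclideanSpace ℝ (Fin d) × S,
              ENNReal.ofReal (Real.exp (-(h (k + 1) p)))
              ∂(Measure.pi fun _ => (volume.restrict Λ).prod R)) ∧
    ENNReal.ofReal (Real.exp (-z * (volume Λ).toReal)) *
        (1 + ∑' k : ℕ,
          ENNReal.ofReal (z ^ (k + 1) / (Nat.factorial (k + 1) : ℝ)) *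
            ∫⁻ p : Fin (k + 1) → EuclideanSpace ℝ (Fin d) × S,
              ENNReal.ofReal (Real.exp (-(h (k + 1) p)))
              ∂(Measure.pi fun _ => (volume.restrict Λ).prod R)) < ⊤ := by
  set μ := (volume.restrict Λ).prod R
  set g : S → ℝ := fun m => c * (1 + ‖m‖ ^ ((d : ℝ) + δ))
  have hmoment : ∫⁻ m, ENNReal.ofReal (Real.exp (g m)) ∂ R < ⊤ :=
    lintegral_exp_mul_rpow_lt_top R norm_nonneg (a := (d : ℝ) + δ) (by positivity) hδ hc
      (by rwa [add_assoc, ← two_mul])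
  have hone : ∫⁻ q, ENNReal.ofReal (Real.exp (g q.2)) ∂μ < ⊤ :=
    (lintegral_fun_snd _ _ (f := fun m => ENNReal.ofReal (Real.exp (g m))) (by fun_prop)).trans_lt
      (ENNReal.mul_lt_top (by simpa using hΛb.measure_lt_top) hmoment)
  have hbound (k : ℕ) : ∫⁻ p, ENNReal.ofReal (Real.exp (-(h (k + 1) p))) ∂(Measure.pi fun _ => μ)
      ≤ (∫⁻ q, ENNReal.ofReal (Real.exp (g q.2)) ∂μ) ^ (k + 1) :=
    lintegral_exp_neg_le_pow_of_stable μ (by fun_prop) _ fun p => by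
      simpa [g, Finset.mul_sum] using hstab (k + 1) p
  have hsum : ∑' k : ℕ, ENNReal.ofReal (z ^ (k + 1) / (Nat.factorial (k + 1) : ℝ)) *
      ∫⁻ p, ENNReal.ofReal (Real.exp (-(h (k + 1) p))) ∂(Measure.pi fun _ => μ) < ⊤ := calc
    _ ≤ ∑' k : ℕ, (fun n : ℕ => ENNReal.ofReal (z ^ n / n !) *
          (∫⁻ q, ENNReal.ofReal (Real.exp (g q.2)) ∂μ) ^ n) (k + 1) :=
        ENNReal.tsum_le_tsum fun k => mul_le_mul_right (hbound k) _
    _ ≤ _ := ENNReal.tsum_comp_le_tsum_of_injective (add_left_injective 1) _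
    _ < ⊤ := tsum_ofReal_pow_div_factorial_mul_pow_lt_top hz.le hone.ne
  refine ⟨ENNReal.mul_pos (by simp [Real.exp_pos]) (by simp), ?_⟩
  exact ENNReal.mul_lt_top ENNReal.ofReal_lt_top (ENNReal.add_lt_top.2 ⟨ENNReal.one_lt_top, hsum⟩)

/-- (Lemma 2.3) The partition function
`Z_Λ = e^{−z|Λ|}·(1 + Σ_{k≥1} (z^k/k!) ∫_{(Λ×S)^k} e^{−h_k} )` is finite and positive,
under the super-exponential moment assumption `(H_m)` on the mark law `R` and the
stability (with constant `c`) of the energies `h_k`. -/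
theorem partition_function_well_defined
    (d : ℕ) (hd : 1 ≤ d) (δ z c : ℝ) (hδ : 0 < δ) (hz : 0 < z) (hc : 0 ≤ c)
    {S : Type*} [NormedAddCommGroup S] [NormedSpace ℝ S]
    [MeasurableSpace S] [BorelSpace S]
    (R : Measure S) [IsProbabilityMeasure R]
    (hR : ∫⁻ m, ENNReal.ofReal (Real.exp (‖m‖ ^ ((d : ℝ) + 2 * δ))) ∂ R < ⊤)
    (Λ : Set (EuclideanSpace ℝ (Fin d)))
    (hΛb : Bornology.IsBounded Λ) (hΛm : MeasurableSet Λ)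
    (h : (k : ℕ) → (Fin k → EuclideanSpace ℝ (Fin d) × S) → ℝ)
    (hmeas : ∀ k, Measurable (h k))
    (hstab : ∀ (k : ℕ) (p : Fin k → EuclideanSpace ℝ (Fin d) × S),
      -(c * ∑ i, (1 + ‖(p i).2‖ ^ ((d : ℝ) + δ))) ≤ h k p) :
    0 < ENNReal.ofReal (Real.exp (-z * (volume Λ).toReal)) *
        (1 + ∑' k : ℕ,
          ENNReal.ofReal (z ^ (k + 1) / (Nat.factorial (k + 1) : ℝ)) *
            ∫⁻ p : Fin (k + 1) → EuclideanSpace ℝ (Fin d) × S,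
              ENNReal.ofReal (Real.exp (-(h (k + 1) p)))
              ∂(Measure.pi fun _ => (volume.restrict Λ).prod R)) ∧
    ENNReal.ofReal (Real.exp (-z * (volume Λ).toReal)) *
        (1 + ∑' k : ℕ,
          ENNReal.ofReal (z ^ (k + 1) / (Nat.factorial (k + 1) : ℝ)) *
            ∫⁻ p : Fin (k + 1) → EuclideanSpace ℝ (Fin d) × S,
              ENNReal.ofReal (Real.exp (-(h (k + 1) p)))
              ∂(Measure.pi fun _ => (volume.restrict Λ).prod R)) < ⊤ :=
  partition_function_well_defined_general d δ z c hδ hz hc R hR Λ hΛb h hstab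
end

section
/- (Stability of the marked pair potential of the diffusion model, Section 4) For every N ≥ 1 and every family of marked points 𝘅 : Fin N → ℝ² × C([0,1],ℝ²), writing 𝘅_i = (x_i, m_i), one has Σ_{i<j} Φ(𝘅_i, 𝘅_j) ≥ −c_φ · N. -/
open scoped NNReal

/-- The two-body potential `Φ` of the diffusion model of Section 4: locations in `ℝ²`,
marks in `C([0,1],ℝ²)` with the supremum norm. -/
noncomputable def diffusionPairPotential (a₀ : ℝ) (φ φt : ℝ → ℝ)
    (p q : EuclideanSpace ℝ (Fin 2) × C(Set.Icc (0 : ℝ) 1, EuclideanSpace ℝ (Fin 2))) :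
    ℝ :=
  if dist p.1 q.1 ≤ a₀ + ‖p.2‖ + ‖q.2‖ then
    φ (dist p.1 q.1) + ∫ s : Set.Icc (0 : ℝ) 1, φt ‖p.2 s - q.2 s‖
  else 0

/-- Inside the interaction range the mark term is nonnegative; outside it the cut-off
replaces `φ` by `0`, and there `dist ≥ a₀`, where `φ ≤ 0`. -/
lemma apply_dist_le_diffusionPairPotential {a₀ : ℝ} {φ φt : ℝ → ℝ}
    (hφt_nonneg : ∀ u, 0 ≤ φt u) (hφ_neg : ∀ u : ℝ, a₀ ≤ u → φ u ≤ 0)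
    (p q : EuclideanSpace ℝ (Fin 2) × C(Set.Icc (0 : ℝ) 1, EuclideanSpace ℝ (Fin 2))) :
    φ (dist p.1 q.1) ≤ diffusionPairPotential a₀ φ φt p q := by
  unfold diffusionPairPotential
  split_ifs with h_near
  · have h_marks : 0 ≤ ∫ s : Set.Icc (0 : ℝ) 1, φt ‖p.2 s - q.2 s‖ :=
      MeasureTheory.integral_nonneg fun _ => hφt_nonneg _
    linarith
  · exact hφ_neg _ (by linarith [not_le.mp h_near, norm_nonneg p.2, norm_nonneg q.2])

theorem diffusionPairPotential_stable_general
    (a₀ cφ : ℝ)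
    (φ φt : ℝ → ℝ) (hφt_nonneg : ∀ u, 0 ≤ φt u)
    (hφ_stable : ∀ N : ℕ, 1 ≤ N → ∀ x : Fin N → EuclideanSpace ℝ (Fin 2),
      -(cφ * N) ≤ ∑ p ∈ Finset.univ.filter (fun p : Fin N × Fin N => p.1 < p.2),
        φ (dist (x p.1) (x p.2)))
    (hφ_neg : ∀ u : ℝ, a₀ ≤ u → φ u ≤ 0)
    (N : ℕ) (hN : 1 ≤ N)
    (X : Fin N → EuclideanSpace ℝ (Fin 2) × C(Set.Icc (0 : ℝ) 1, EuclideanSpace ℝ (Fin 2))) :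
    -(cφ * N) ≤ ∑ p ∈ Finset.univ.filter (fun p : Fin N × Fin N => p.1 < p.2),
      diffusionPairPotential a₀ φ φt (X p.1) (X p.2) :=
  (hφ_stable N hN fun i => (X i).1).trans <| Finset.sum_le_sum fun p _ =>
    apply_dist_le_diffusionPairPotential hφt_nonneg hφ_neg (X p.1) (X p.2)

/-- Stability of the marked pair potential of the diffusion model:
`Σ_{i<j} Φ(𝘅_i,𝘅_j) ≥ −c_φ·N`. -/
theorem diffusionPairPotential_stable
    (a₀ cφ : ℝ) (ha₀ : 0 < a₀) (hcφ : 0 ≤ cφ)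
    (φ φt : ℝ → ℝ) (hφt_cont : Continuous φt) (hφt_nonneg : ∀ u, 0 ≤ φt u)
    (hφ_stable : ∀ N : ℕ, 1 ≤ N → ∀ x : Fin N → EuclideanSpace ℝ (Fin 2),
      -(cφ * N) ≤ ∑ p ∈ Finset.univ.filter (fun p : Fin N × Fin N => p.1 < p.2),
        φ (dist (x p.1) (x p.2)))
    (hφ_neg : ∀ u : ℝ, a₀ ≤ u → φ u ≤ 0)
    (N : ℕ) (hN : 1 ≤ N)
    (X : Fin N → EuclideanSpace ℝ (Fin 2) × C(Set.Icc (0 : ℝ) 1, EuclideanSpace ℝ (Fin 2))) :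
    -(cφ * N) ≤ ∑ p ∈ Finset.univ.filter (fun p : Fin N × Fin N => p.1 < p.2),
      diffusionPairPotential a₀ φ φt (X p.1) (X p.2) :=
  diffusionPairPotential_stable_general a₀ cφ φ φt hφt_nonneg hφ_stable hφ_neg N hN X
end

section
/- (Locally uniform stability (H_loc.st) for the diffusion model) For all N, M ≥ 1 and all families γ : Fin N → ℝ² × C([0,1],ℝ²) and ξ : Fin M → ℝ² × C([0,1],ℝ²) of marked points, writing γ_i = (x_i, m_i), one has Σ_{i=1}^N Ψ(γ_i) + Σ_{i<j} Φ(γ_i, γ_j) + Σ_{i=1}^N Σ_{j=1}^M Φ(γ_i, ξ_j) ≥ −(c₁ + c_φ + c₂·M) · Σ_{i=1}^N (1 + ‖m_i‖^{2+δ}). -/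
section diffusionPairPotential

variable {a₀ c₂ : ℝ} {φ φt : ℝ → ℝ}
  (p q : EuclideanSpace ℝ (Fin 2) × C(Set.Icc (0 : ℝ) 1, EuclideanSpace ℝ (Fin 2)))

lemma phi_dist_le_diffusionPairPotential (hφt_nonneg : ∀ u, 0 ≤ φt u)
    (hφ_neg : ∀ u, a₀ ≤ u → φ u ≤ 0) :
    φ (dist p.1 q.1) ≤ diffusionPairPotential a₀ φ φt p q := by
  unfold diffusionPairPotential
  split_ifs with hclose
  · exact le_add_of_nonneg_right (MeasureTheory.integral_nonneg fun s => hφt_nonneg _)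
  · refine hφ_neg _ ?_
    linarith [norm_nonneg p.2, norm_nonneg q.2]

lemma neg_le_diffusionPairPotential (hφt_nonneg : ∀ u, 0 ≤ φt u) (hc₂ : 0 ≤ c₂)
    (hφ_bdd : ∀ u, -c₂ ≤ φ u) :
    -c₂ ≤ diffusionPairPotential a₀ φ φt p q := by
  unfold diffusionPairPotential
  split_ifs
  · exact (hφ_bdd _).trans
      (le_add_of_nonneg_right (MeasureTheory.integral_nonneg fun s => hφt_nonneg _))
  · exact neg_nonpos.mpr hc₂

end diffusionPairPotential

lemma card_le_sum_one_add {ι : Type*} [Fintype ι] {f : ι → ℝ} (hf : ∀ i, 0 ≤ f i) :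
    (Fintype.card ι : ℝ) ≤ ∑ i, (1 + f i) := by
  rw [Finset.sum_add_distrib]
  simpa using Finset.sum_nonneg fun i _ => hf i

theorem diffusion_energy_locally_uniformly_stable_general
    (a₀ cφ c₂ δ c₁ : ℝ) (hcφ : 0 ≤ cφ) (hc₂ : 0 ≤ c₂)
    (φ φt : ℝ → ℝ) (hφt_nonneg : ∀ u, 0 ≤ φt u)
    (hφ_stable : ∀ N : ℕ, 1 ≤ N → ∀ x : Fin N → EuclideanSpace ℝ (Fin 2),
      -(cφ * N) ≤ ∑ p ∈ Finset.univ.filter (fun p : Fin N × Fin N => p.1 < p.2),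
        φ (dist (x p.1) (x p.2)))
    (hφ_neg : ∀ u : ℝ, a₀ ≤ u → φ u ≤ 0)
    (hφ_bdd : ∀ u : ℝ, -c₂ ≤ φ u)
    (Ψ : EuclideanSpace ℝ (Fin 2) × C(Set.Icc (0 : ℝ) 1, EuclideanSpace ℝ (Fin 2)) → ℝ)
    (hΨ : ∀ p, -(c₁ * (1 + ‖p.2‖ ^ ((2 : ℝ) + δ))) ≤ Ψ p)
    (N M : ℕ) (hN : 1 ≤ N)
    (γ : Fin N → EuclideanSpace ℝ (Fin 2) × C(Set.Icc (0 : ℝ) 1, EuclideanSpace ℝ (Fin 2)))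
    (ξ : Fin M → EuclideanSpace ℝ (Fin 2) × C(Set.Icc (0 : ℝ) 1, EuclideanSpace ℝ (Fin 2))) :
    -((c₁ + cφ + c₂ * M) * ∑ i, (1 + ‖(γ i).2‖ ^ ((2 : ℝ) + δ))) ≤
      (∑ i, Ψ (γ i)) +
        (∑ p ∈ Finset.univ.filter (fun p : Fin N × Fin N => p.1 < p.2),
          diffusionPairPotential a₀ φ φt (γ p.1) (γ p.2)) +
        ∑ i : Fin N, ∑ j : Fin M, diffusionPairPotential a₀ φ φt (γ i) (ξ j) := by
  set S := ∑ i, (1 + ‖(γ i).2‖ ^ ((2 : ℝ) + δ))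
  have hNS : (N : ℝ) ≤ S := by
    simpa using card_le_sum_one_add fun i => Real.rpow_nonneg (norm_nonneg (γ i).2) (2 + δ)
  have hself : -(c₁ * S) ≤ ∑ i, Ψ (γ i) := by
    rw [Finset.mul_sum, ← Finset.sum_neg_distrib]
    exact Finset.sum_le_sum fun i _ => hΨ (γ i)
  have hpair : -(cφ * N) ≤ ∑ p ∈ Finset.univ.filter (fun p : Fin N × Fin N => p.1 < p.2),
      diffusionPairPotential a₀ φ φt (γ p.1) (γ p.2) :=
    (hφ_stable N hN fun i => (γ i).1).trans <| Finset.sum_le_sum fun p _ =>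
      phi_dist_le_diffusionPairPotential _ _ hφt_nonneg hφ_neg
  have hcross : -(c₂ * M * N) ≤ ∑ i : Fin N, ∑ j : Fin M,
      diffusionPairPotential a₀ φ φt (γ i) (ξ j) :=
    calc -(c₂ * M * N) = ∑ _i : Fin N, ∑ _j : Fin M, -c₂ := by
          simp only [Finset.sum_neg_distrib, Finset.sum_const, Finset.card_univ, Fintype.card_fin,
            nsmul_eq_mul]
          ring
      _ ≤ _ := Finset.sum_le_sum fun i _ => Finset.sum_le_sum fun j _ =>
        neg_le_diffusionPairPotential _ _ hφt_nonneg hc₂ hφ_bdd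
  have := mul_le_mul_of_nonneg_left hNS hcφ
  have := mul_le_mul_of_nonneg_left hNS (mul_nonneg hc₂ M.cast_nonneg)
  linarith

/-- Locally uniform stability `(H_loc.st)` for the diffusion model:
`Σ_i Ψ(γ_i) + Σ_{i<j} Φ(γ_i,γ_j) + Σ_i Σ_j Φ(γ_i,ξ_j)
  ≥ −(c₁+c_φ+c₂·M)·Σ_i (1+‖m_i‖^{2+δ})`. -/
theorem diffusion_energy_locally_uniformly_stable
    (a₀ cφ c₂ δ c₁ : ℝ) (ha₀ : 0 < a₀) (hcφ : 0 ≤ cφ) (hc₂ : 0 ≤ c₂)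
    (hδ : 0 < δ) (hc₁ : 0 ≤ c₁)
    (φ φt : ℝ → ℝ) (hφt_cont : Continuous φt) (hφt_nonneg : ∀ u, 0 ≤ φt u)
    (hφ_stable : ∀ N : ℕ, 1 ≤ N → ∀ x : Fin N → EuclideanSpace ℝ (Fin 2),
      -(cφ * N) ≤ ∑ p ∈ Finset.univ.filter (fun p : Fin N × Fin N => p.1 < p.2),
        φ (dist (x p.1) (x p.2)))
    (hφ_neg : ∀ u : ℝ, a₀ ≤ u → φ u ≤ 0)
    (hφ_bdd : ∀ u : ℝ, -c₂ ≤ φ u)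
    (Ψ : EuclideanSpace ℝ (Fin 2) × C(Set.Icc (0 : ℝ) 1, EuclideanSpace ℝ (Fin 2)) → ℝ)
    (hΨ : ∀ p, -(c₁ * (1 + ‖p.2‖ ^ ((2 : ℝ) + δ))) ≤ Ψ p)
    (N M : ℕ) (hN : 1 ≤ N) (hM : 1 ≤ M)
    (γ : Fin N → EuclideanSpace ℝ (Fin 2) × C(Set.Icc (0 : ℝ) 1, EuclideanSpace ℝ (Fin 2)))
    (ξ : Fin M → EuclideanSpace ℝ (Fin 2) × C(Set.Icc (0 : ℝ) 1, EuclideanSpace ℝ (Fin 2))) :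
    -((c₁ + cφ + c₂ * M) * ∑ i, (1 + ‖(γ i).2‖ ^ ((2 : ℝ) + δ))) ≤
      (∑ i, Ψ (γ i)) +
        (∑ p ∈ Finset.univ.filter (fun p : Fin N × Fin N => p.1 < p.2),
          diffusionPairPotential a₀ φ φt (γ p.1) (γ p.2)) +
        ∑ i : Fin N, ∑ j : Fin M, diffusionPairPotential a₀ φ φt (γ i) (ξ j) :=
  diffusion_energy_locally_uniformly_stable_general a₀ cφ c₂ δ c₁ hcφ hc₂ φ φt hφt_nonneg hφ_stable
    hφ_neg hφ_bdd Ψ hΨ N M hN γ ξ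
end
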